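/- For any graph G that is the disjoint union of two graphs H and K, the squared analytic torsion is multiplicative: A(G) = A(H) · A(K). -/

import Mathlib

/-! For a real symmetric matrix the order of vanishing of the characteristic polynomial `χ` at `0`
is the nullity, so the pseudo determinant is `(-1) ^ (deg χ - ord₀ χ)` times the trailing
coefficient of `χ`, a quantity that is multiplicative in `χ`. The Laplacians `d_kᵀ d_k` of a
disjoint union are block diagonal, and the characteristic polynomial of a block diagonal matrix is
the product of those of its blocks. -/

open Matrix

/-- The pseudo determinant of a real square matrix: the product of its nonzero
eigenvalues, computed as `(-1)^rank` times the lowest-order nonzero coefficient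
of the characteristic polynomial. -/
noncomputable def pseudoDet {V : Type*} [Fintype V] [DecidableEq V]
    (A : Matrix V V ℝ) : ℝ :=
  (-1 : ℝ) ^ A.rank * A.charpoly.coeff (Fintype.card V - A.rank)

open Polynomial

theorem Polynomial.neg_one_pow_sub_mul_trailingCoeff_mul {R : Type*} [CommRing R]
    [NoZeroDivisors R] {p q : R[X]} (hp : p ≠ 0) (hq : q ≠ 0) :
    (-1 : R) ^ ((p * q).natDegree - (p * q).natTrailingDegree) * (p * q).trailingCoeff =
      (-1) ^ (p.natDegree - p.natTrailingDegree) * p.trailingCoeff *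
        ((-1) ^ (q.natDegree - q.natTrailingDegree) * q.trailingCoeff) := by
  have hp' := p.natTrailingDegree_le_natDegree
  have hq' := q.natTrailingDegree_le_natDegree
  rw [natDegree_mul hp hq, natTrailingDegree_mul hp hq, trailingCoeff_mul,
    show p.natDegree + q.natDegree - (p.natTrailingDegree + q.natTrailingDegree) =
      (p.natDegree - p.natTrailingDegree) + (q.natDegree - q.natTrailingDegree) by omega,
    pow_add]
  ring

namespace Matrix

theorem IsHermitian.natTrailingDegree_charpoly_add_rank {𝕜 n : Type*} [RCLike 𝕜] [Fintype n]
    [DecidableEq n] {A : Matrix n n 𝕜} (hA : A.IsHermitian) :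
    A.charpoly.natTrailingDegree + A.rank = Fintype.card n := by
  have hzero : A.charpoly.natTrailingDegree = Fintype.card {i // hA.eigenvalues i = 0} := by
    rw [← rootMultiplicity_eq_natTrailingDegree', ← count_roots,
      hA.roots_charpoly_eq_eigenvalues, Multiset.count_map, Fintype.card_subtype,
      Finset.card_def, Finset.filter_val]
    exact congrArg _ (Multiset.filter_congr fun i _ => by simp [eq_comm (a := (0 : 𝕜))])
  rw [hzero, hA.rank_eq_card_non_zero_eigs, Fintype.card_subtype_compl,
    Nat.add_sub_cancel' (Fintype.card_subtype_le _)]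

theorem IsHermitian.pseudoDet_eq {n : Type*} [Fintype n] [DecidableEq n] {A : Matrix n n ℝ}
    (hA : A.IsHermitian) :
    pseudoDet A = (-1) ^ (A.charpoly.natDegree - A.charpoly.natTrailingDegree) *
      A.charpoly.trailingCoeff := by
  have h := hA.natTrailingDegree_charpoly_add_rank
  rw [pseudoDet, charpoly_natDegree_eq_dim, trailingCoeff,
    show Fintype.card n - A.charpoly.natTrailingDegree = A.rank by omega,
    show Fintype.card n - A.rank = A.charpoly.natTrailingDegree by omega]

theorem pseudoDet_fromBlocks_zero {m n : Type*} [Fintype m] [Fintype n] [DecidableEq m]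
    [DecidableEq n] {A : Matrix m m ℝ} {D : Matrix n n ℝ} (hA : A.IsHermitian)
    (hD : D.IsHermitian) :
    pseudoDet (fromBlocks A 0 0 D) = pseudoDet A * pseudoDet D := by
  rw [(hA.fromBlocks (by simp) hD).pseudoDet_eq, hA.pseudoDet_eq, hD.pseudoDet_eq,
    charpoly_fromBlocks_zero₁₂]
  exact neg_one_pow_sub_mul_trailingCoeff_mul A.charpoly_monic.ne_zero D.charpoly_monic.ne_zero

theorem fromBlocks_zero_transpose_mul_self {l m n o α : Type*} [Fintype l] [Fintype n]
    [NonUnitalNonAssocSemiring α] (A : Matrix l m α) (D : Matrix n o α) :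
    (fromBlocks A 0 0 D)ᵀ * fromBlocks A 0 0 D = fromBlocks (Aᵀ * A) 0 0 (Dᵀ * D) := by
  simp [fromBlocks_transpose, fromBlocks_multiply]

theorem isHermitian_transpose_mul_self {m n : Type*} [Fintype m] (A : Matrix m n ℝ) :
    (Aᵀ * A).IsHermitian :=
  conjTranspose_eq_transpose_of_trivial A ▸ isHermitian_conjTranspose_mul_self A

end Matrix

theorem torsion_disjoint_union_general (r : ℕ) (f g : ℕ → ℕ)
    (dH : ∀ k : ℕ, Matrix (Fin (f (k + 1))) (Fin (f k)) ℝ)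
    (dK : ∀ k : ℕ, Matrix (Fin (g (k + 1))) (Fin (g k)) ℝ)
    (dG : ∀ k : ℕ, Matrix (Fin (f (k + 1)) ⊕ Fin (g (k + 1)))
      (Fin (f k) ⊕ Fin (g k)) ℝ)
    (hG : ∀ k, dG k = Matrix.fromBlocks (dH k) 0 0 (dK k)) :
    ∏ k ∈ Finset.range (r + 1),
        pseudoDet ((dG k)ᵀ * dG k) ^ ((-1 : ℤ) ^ k) =
      (∏ k ∈ Finset.range (r + 1),
        pseudoDet ((dH k)ᵀ * dH k) ^ ((-1 : ℤ) ^ k)) *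
      ∏ k ∈ Finset.range (r + 1),
        pseudoDet ((dK k)ᵀ * dK k) ^ ((-1 : ℤ) ^ k) := by
  rw [← Finset.prod_mul_distrib]
  refine Finset.prod_congr rfl fun k _ => ?_
  rw [hG k, fromBlocks_zero_transpose_mul_self, pseudoDet_fromBlocks_zero
    (isHermitian_transpose_mul_self _) (isHermitian_transpose_mul_self _), mul_zpow]

/-- if the graph `G` is the disjoint union of graphs `H` and `K`,
so that each exterior derivative of its Whitney complex is the direct sum
(`Matrix.fromBlocks`) of the exterior derivatives `dH k`, `dK k` of the Whitney
complexes of `H` and `K`, then the squared analytic torsion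
`A = ∏_k Det(D_k)^{(-1)^k}` (with `D_k = d_kᵀ d_k`) is multiplicative:
`A(G) = A(H) · A(K)`. -/
theorem torsion_disjoint_union (r : ℕ) (f g : ℕ → ℕ)
    (dH : ∀ k : ℕ, Matrix (Fin (f (k + 1))) (Fin (f k)) ℝ)
    (dK : ∀ k : ℕ, Matrix (Fin (g (k + 1))) (Fin (g k)) ℝ)
    (hH : ∀ k, dH (k + 1) * dH k = 0)
    (hK : ∀ k, dK (k + 1) * dK k = 0)
    (dG : ∀ k : ℕ, Matrix (Fin (f (k + 1)) ⊕ Fin (g (k + 1)))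
      (Fin (f k) ⊕ Fin (g k)) ℝ)
    (hG : ∀ k, dG k = Matrix.fromBlocks (dH k) 0 0 (dK k)) :
    ∏ k ∈ Finset.range (r + 1),
        pseudoDet ((dG k)ᵀ * dG k) ^ ((-1 : ℤ) ^ k) =
      (∏ k ∈ Finset.range (r + 1),
        pseudoDet ((dH k)ᵀ * dH k) ^ ((-1 : ℤ) ^ k)) *
      ∏ k ∈ Finset.range (r + 1),
        pseudoDet ((dK k)ᵀ * dK k) ^ ((-1 : ℤ) ^ k) :=
  torsion_disjoint_union_general r f g dH dK dG hG
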